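/- Assume additionally μ ≠ 0. Let v, δ ∈ ℕ₀ with δ ≤ v, let m, n ∈ ℕ with n ≥ m, and let x, z ∈ ℂ. Then the m-th partial derivative with respect to x of _Tℬ^{(c,v)}_{n,μ}(x,z;λ) equals m! · (−μ)^{−δ} · Σ_{r=0}^{n−m} binomial(n,r) · binomial(n−r,m) · ℬ^{(δ)}_{r}(−λ/μ) · _Tℬ^{(c,v−δ)}_{n−r−m,μ}(x,z;λ). (Note that λ + μ ≠ 0 guarantees −λ/μ ≠ 1.) -/

import Mathlib

/-!
Parametric kinds of generalized Apostol–Bernoulli polynomials (Özat–Çekim–Kızılateş–Qi).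
All generating functions are formal power series in `t` over `ℂ`; each polynomial family is
`n!` times the `n`-th coefficient of its generating series.
-/

open PowerSeries

noncomputable section

/-- The formal power series `t / (λ eᵗ + μ)`. -/
def bker (lam mu : ℂ) : ℂ⟦X⟧ := X * (C (R := ℂ) lam * exp ℂ + C (R := ℂ) mu)⁻¹

/-- The formal power series `e^{x t}`. -/
def expS (x : ℂ) : ℂ⟦X⟧ := rescale x (exp ℂ)

/-- The formal power series `cos (z t)`. -/
def cosS (z : ℂ) : ℂ⟦X⟧ := rescale z (cos ℂ)

/-- The formal power series `sin (z t)`. -/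
def sinS (z : ℂ) : ℂ⟦X⟧ := rescale z (sin ℂ)

/-- Parametric (cosine) kind of generalized Apostol–Bernoulli polynomials
`_Tℬ^{(c,v)}_{n,μ}(x,z;λ)`, defined by
`(t/(λeᵗ+μ))^v e^{xt} U(t) cos(zt) = Σ_n _Tℬ^{(c,v)}_{n,μ}(x,z;λ) tⁿ/n!`. -/
def TBc (lam mu : ℂ) (U : ℂ⟦X⟧) (v n : ℕ) (x z : ℂ) : ℂ :=
  n.factorial * coeff (R := ℂ) n (bker lam mu ^ v * expS x * U * cosS z)

/-- Parametric (sine) kind of generalized Apostol–Bernoulli polynomials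
`_Tℬ^{(s,v)}_{n,μ}(x,z;λ)`, defined by
`(t/(λeᵗ+μ))^v e^{xt} U(t) sin(zt) = Σ_n _Tℬ^{(s,v)}_{n,μ}(x,z;λ) tⁿ/n!`. -/
def TBs (lam mu : ℂ) (U : ℂ⟦X⟧) (v n : ℕ) (x z : ℂ) : ℂ :=
  n.factorial * coeff (R := ℂ) n (bker lam mu ^ v * expS x * U * sinS z)

/-- `_Tℬ^{(v)}_{n,μ}(x;λ)`, defined by
`(t/(λeᵗ+μ))^v e^{xt} U(t) = Σ_n _Tℬ^{(v)}_{n,μ}(x;λ) tⁿ/n!`. -/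
def TB (lam mu : ℂ) (U : ℂ⟦X⟧) (v n : ℕ) (x : ℂ) : ℂ :=
  n.factorial * coeff (R := ℂ) n (bker lam mu ^ v * expS x * U)

/-- Cosine generalized Apostol–Bernoulli polynomials `ℬ^{(c,v)}_{n,μ}(x,z;λ)`, defined by
`(t/(λeᵗ+μ))^v e^{xt} cos(zt) = Σ_n ℬ^{(c,v)}_{n,μ}(x,z;λ) tⁿ/n!`. -/
def Bc (lam mu : ℂ) (v n : ℕ) (x z : ℂ) : ℂ :=
  n.factorial * coeff (R := ℂ) n (bker lam mu ^ v * expS x * cosS z)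

/-- Sine generalized Apostol–Bernoulli polynomials `ℬ^{(s,v)}_{n,μ}(x,z;λ)`. -/
def Bs (lam mu : ℂ) (v n : ℕ) (x z : ℂ) : ℂ :=
  n.factorial * coeff (R := ℂ) n (bker lam mu ^ v * expS x * sinS z)

/-- Generalized Apostol–Bernoulli polynomials of order `v`: `ℬ^{(v)}_{n,μ}(x;λ)`, defined by
`(t/(λeᵗ+μ))^v e^{xt} = Σ_n ℬ^{(v)}_{n,μ}(x;λ) tⁿ/n!`. -/
def Bpoly (lam mu : ℂ) (v n : ℕ) (x : ℂ) : ℂ :=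
  n.factorial * coeff (R := ℂ) n (bker lam mu ^ v * expS x)

/-- Generalized Apostol–Bernoulli numbers `ℬ^{(v)}_{n,μ}(λ) := ℬ^{(v)}_{n,μ}(0;λ)`. -/
def Bnum (lam mu : ℂ) (v n : ℕ) : ℂ := Bpoly lam mu v n 0

/-- The 2-variable general polynomials `T_n(x)`, defined by `e^{xt} U(t) = Σ_n T_n(x) tⁿ/n!`. -/
def Tpoly (U : ℂ⟦X⟧) (n : ℕ) (x : ℂ) : ℂ := n.factorial * coeff (R := ℂ) n (expS x * U)

/-- `U_n := n!` times the `n`-th coefficient of `U`. -/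
def Unum (U : ℂ⟦X⟧) (n : ℕ) : ℂ := n.factorial * coeff (R := ℂ) n U

/-- `C_n(x,y)`, defined by `e^{xt} cos(yt) = Σ_n C_n(x,y) tⁿ/n!`. -/
def Cpoly (n : ℕ) (x y : ℂ) : ℂ := n.factorial * coeff (R := ℂ) n (expS x * cosS y)

/-- `S_n(x,y)`, defined by `e^{xt} sin(yt) = Σ_n S_n(x,y) tⁿ/n!`. -/
def Spoly (n : ℕ) (x y : ℂ) : ℂ := n.factorial * coeff (R := ℂ) n (expS x * sinS y)

/-- Apostol–Bernoulli numbers of order `δ`: `ℬ^{(δ)}_n(Λ)`, defined by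
`(t/(Λeᵗ−1))^δ = Σ_n ℬ^{(δ)}_n(Λ) tⁿ/n!`. -/
def ABnum (L : ℂ) (d n : ℕ) : ℂ :=
  n.factorial * coeff (R := ℂ) n ((X * (C (R := ℂ) L * exp ℂ - 1)⁻¹) ^ d)

/-- Generalized Apostol–Genocchi polynomials `𝒢^{(v)}_{n,μ}(x;λ)`, defined by
`(2t/(λeᵗ+μ))^v e^{xt} = Σ_n 𝒢^{(v)}_{n,μ}(x;λ) tⁿ/n!`. -/
def Gpoly (lam mu : ℂ) (v n : ℕ) (x : ℂ) : ℂ :=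
  n.factorial * coeff (R := ℂ) n ((C (R := ℂ) 2 * X * (C (R := ℂ) lam * exp ℂ + C (R := ℂ) mu)⁻¹) ^ v * expS x)

end

/-! The kernel factors as `t/(λeᵗ+μ) = (-μ)⁻¹ · t/(Λeᵗ-1)` with `Λ = -λ/μ`, so splitting off `δ`
of the `v` factors gives `_Tℬ^{(c,v)}_k = (-μ)^{-δ} Σ_r C(k,r) ℬ^{(δ)}_r(Λ) _Tℬ^{(c,v-δ)}_{k-r}`.
Since only `e^{xt}` depends on `x`, the family is an Appell sequence in `x`:
`∂ₓ^m _Tℬ_n = n(n-1)⋯(n-m+1) _Tℬ_{n-m}`. The two combine through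
`n(n-1)⋯(n-m+1) · C(n-m,r) = m! · C(n,r) · C(n-r,m)`. -/

open PowerSeries Finset Nat

theorem Nat.choose_mul_choose_sub_comm (n m r : ℕ) :
    n.choose m * (n - m).choose r = n.choose r * (n - r).choose m := by
  have hm := Nat.choose_mul (n := n) (Nat.le_add_right m r)
  have hr := Nat.choose_mul (n := n) (Nat.le_add_left r m)
  rw [Nat.add_sub_cancel_left] at hm
  rw [Nat.add_sub_cancel] at hr
  rw [← hm, ← hr, Nat.choose_symm_add]

theorem Nat.descFactorial_mul_choose_sub (n m r : ℕ) :
    n.descFactorial m * (n - m).choose r = m ! * (n.choose r * (n - r).choose m) := by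
  rw [Nat.descFactorial_eq_factorial_mul_choose, mul_assoc, Nat.choose_mul_choose_sub_comm]

theorem PowerSeries.factorial_mul_coeff_mul {R : Type*} [CommSemiring R] (F G : R⟦X⟧) (n : ℕ) :
    (n ! : R) * coeff n (F * G)
      = ∑ r ∈ range (n + 1),
          (n.choose r : R) * (r ! * coeff r F) * ((n - r)! * coeff (n - r) G) := by
  rw [coeff_mul, Nat.sum_antidiagonal_eq_sum_range_succ (fun i j => coeff i F * coeff j G), mul_sum]
  refine sum_congr rfl fun r hr => ?_
  rw [← Nat.choose_mul_factorial_mul_factorial (Nat.lt_succ_iff.mp (mem_range.mp hr))]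
  push_cast
  ring

theorem coeff_expS (x : ℂ) (n : ℕ) : coeff n (expS x) = x ^ n / n ! := by
  simp [expS, coeff_rescale, coeff_exp, div_eq_mul_inv]

theorem coeff_expS_mul (x : ℂ) (F : ℂ⟦X⟧) (n : ℕ) :
    coeff n (expS x * F) = ∑ i ∈ range (n + 1), x ^ i / i ! * coeff (n - i) F := by
  rw [coeff_mul, Nat.sum_antidiagonal_eq_sum_range_succ (fun i j => coeff i (expS x) * coeff j F)]
  simp only [coeff_expS]

theorem hasDerivAt_coeff_expS_mul (F : ℂ⟦X⟧) (n : ℕ) (x : ℂ) :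
    HasDerivAt (fun x => coeff (n + 1) (expS x * F)) (coeff n (expS x * F)) x := by
  simp_rw [coeff_expS_mul]
  have h := HasDerivAt.fun_sum (u := range (n + 2)) fun i _ =>
    ((hasDerivAt_pow i x).div_const (i ! : ℂ)).mul_const (coeff (n + 1 - i) F)
  refine h.congr_deriv ?_
  rw [sum_range_succ']
  simp only [CharP.cast_eq_zero, zero_mul, zero_div, add_zero, Nat.add_sub_add_right,
    Nat.add_sub_cancel, Nat.factorial_succ]
  refine sum_congr rfl fun i _ => ?_
  push_cast
  field_simp

theorem iteratedDeriv_coeff_expS_mul (F : ℂ⟦X⟧) {m n : ℕ} (hmn : m ≤ n) :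
    iteratedDeriv m (fun x => coeff n (expS x * F)) = fun x => coeff (n - m) (expS x * F) := by
  induction m with
  | zero => simp
  | succ m ih =>
    obtain ⟨k, hk⟩ : ∃ k, n - m = k + 1 := ⟨n - m - 1, by omega⟩
    rw [iteratedDeriv_succ, ih (by omega), hk, show n - (m + 1) = k by omega]
    exact funext fun x => (hasDerivAt_coeff_expS_mul F k x).deriv

noncomputable def apostolBernoulliKernel (L : ℂ) : ℂ⟦X⟧ := X * (C L * exp ℂ - 1)⁻¹

theorem bker_eq_C_mul_apostolBernoulliKernel (lam : ℂ) {mu : ℂ} (hmu : mu ≠ 0) :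
    bker lam mu = C (-mu)⁻¹ * apostolBernoulliKernel (-lam / mu) := by
  have hden : C (-lam / mu) * exp ℂ - 1 = C (-mu)⁻¹ * (C lam * exp ℂ + C mu) := by
    rw [mul_add, ← mul_assoc, ← map_mul, ← map_mul, show (-mu)⁻¹ * lam = -lam / mu by field_simp,
      show (-mu)⁻¹ * mu = -1 by field_simp, map_neg, map_one]
    ring
  have hunit : C (-mu)⁻¹ * C (-mu) = (1 : ℂ⟦X⟧) := by
    rw [← map_mul, inv_mul_cancel₀ (neg_ne_zero.mpr hmu), map_one]
  rw [apostolBernoulliKernel, hden, PowerSeries.mul_inv_rev, C_inv, inv_inv, bker]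
  linear_combination (X * (C lam * exp ℂ + C mu)⁻¹) * hunit.symm

section

variable {lam mu : ℂ} {U : ℂ⟦X⟧} {v : ℕ} {x z : ℂ}

theorem TBc_eq_factorial_mul_coeff_expS_mul (n : ℕ) :
    TBc lam mu U v n x z = n ! * coeff n (expS x * (bker lam mu ^ v * U * cosS z)) := by
  rw [TBc, mul_right_comm _ (expS x), mul_right_comm _ (expS x), mul_comm _ (expS x)]

theorem iteratedDeriv_TBc {m n : ℕ} (hmn : m ≤ n) :
    iteratedDeriv m (fun x => TBc lam mu U v n x z) x
      = n.descFactorial m * TBc lam mu U v (n - m) x z := by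
  simp_rw [TBc_eq_factorial_mul_coeff_expS_mul]
  rw [iteratedDeriv_const_mul_field, iteratedDeriv_coeff_expS_mul _ hmn,
    ← Nat.factorial_mul_descFactorial hmn]
  push_cast
  ring

theorem TBc_eq_sum_ABnum (hmu : mu ≠ 0) {δ : ℕ} (hδ : δ ≤ v) (k : ℕ) :
    TBc lam mu U v k x z = (-mu) ^ (-(δ : ℤ)) *
      ∑ r ∈ range (k + 1), (k.choose r : ℂ) * ABnum (-lam / mu) δ r *
        TBc lam mu U (v - δ) (k - r) x z := by
  obtain ⟨w, rfl⟩ := Nat.exists_eq_add_of_le hδ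
  have hpow : bker lam mu ^ (δ + w)
      = C ((-mu) ^ (-(δ : ℤ))) * (apostolBernoulliKernel (-lam / mu) ^ δ * bker lam mu ^ w) := by
    rw [pow_add, bker_eq_C_mul_apostolBernoulliKernel lam hmu, mul_pow, ← map_pow, zpow_neg,
      zpow_natCast, inv_pow, mul_assoc]
  simp only [TBc, ABnum, apostolBernoulliKernel, Nat.add_sub_cancel_left] at hpow ⊢
  rw [hpow]
  simp only [mul_assoc]
  rw [coeff_C_mul, mul_left_comm, factorial_mul_coeff_mul]
  simp only [mul_assoc]

end

theorem stmt16_general (lam mu : ℂ) (U : ℂ⟦X⟧)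
    (hmu : mu ≠ 0) (v δ : ℕ) (hδ : δ ≤ v) (m n : ℕ) (hmn : m ≤ n) (x z : ℂ) :
    iteratedDeriv m (fun x : ℂ => TBc lam mu U v n x z) x
      = (m.factorial : ℂ) * (-mu) ^ (-(δ : ℤ)) *
          ∑ r ∈ Finset.range (n - m + 1),
            (n.choose r : ℂ) * ((n - r).choose m : ℂ) * ABnum (-lam / mu) δ r *
              TBc lam mu U (v - δ) (n - r - m) x z := by
  rw [iteratedDeriv_TBc hmn, TBc_eq_sum_ABnum hmu hδ, mul_sum, mul_sum, mul_sum]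
  refine sum_congr rfl fun r _ => ?_
  have hcomb : (n.descFactorial m : ℂ) * (n - m).choose r
      = m ! * (n.choose r * (n - r).choose m) := by
    exact_mod_cast Nat.descFactorial_mul_choose_sub n m r
  rw [show n - r - m = n - m - r by omega]
  linear_combination
    (-mu) ^ (-(δ : ℤ)) * ABnum (-lam / mu) δ r * TBc lam mu U (v - δ) (n - m - r) x z * hcomb

theorem stmt16 (lam mu : ℂ) (hlm : lam + mu ≠ 0) (U : ℂ⟦X⟧) (hU : PowerSeries.coeff (R := ℂ) 0 U ≠ 0)
    (hmu : mu ≠ 0) (v δ : ℕ) (hδ : δ ≤ v) (m n : ℕ) (hm : 1 ≤ m) (hmn : m ≤ n) (x z : ℂ) :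
    iteratedDeriv m (fun x : ℂ => TBc lam mu U v n x z) x
      = (m.factorial : ℂ) * (-mu) ^ (-(δ : ℤ)) *
          ∑ r ∈ Finset.range (n - m + 1),
            (n.choose r : ℂ) * ((n - r).choose m : ℂ) * ABnum (-lam / mu) δ r *
              TBc lam mu U (v - δ) (n - r - m) x z :=
  stmt16_general lam mu U hmu v δ hδ m n hmn x z
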